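/- For integers n > 1 and even m ≥ 4, χ_ld(C_m[\overline{K_n}]) = 2, where C_m is the cycle on m vertices. -/

import Mathlib

open Finset

open Classical in
/-- The weight of a vertex: sum of labels of its neighbors. -/
noncomputable def ldWeight {V : Type*} (G : SimpleGraph V) [Fintype V] (f : V → ℕ) (v : V) : ℕ :=
  ∑ x ∈ Finset.univ, if G.Adj v x then f x else 0

/-- `f` is a local distance antimagic labeling of `G`: a bijection onto `{1,…,|V|}`
with adjacent vertices getting distinct weights. -/
def IsLDAL {V : Type*} (G : SimpleGraph V) [Fintype V] (f : V → ℕ) : Prop :=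
  Set.BijOn f Set.univ (Set.Icc 1 (Fintype.card V)) ∧
    ∀ ⦃u v : V⦄, G.Adj u v → ldWeight G f u ≠ ldWeight G f v

/-- The local distance antimagic chromatic number: minimum number of distinct weights. -/
noncomputable def chiLD {V : Type*} (G : SimpleGraph V) [Fintype V] : ℕ :=
  sInf {k | ∃ f : V → ℕ, IsLDAL G f ∧ (Finset.univ.image (ldWeight G f)).card = k}

/-- The join `G + H` of two graphs. -/
def graphJoin {α β : Type*} (G : SimpleGraph α) (H : SimpleGraph β) :
    SimpleGraph (α ⊕ β) where
  Adj x y :=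
    match x, y with
    | Sum.inl a, Sum.inl b => G.Adj a b
    | Sum.inr a, Sum.inr b => H.Adj a b
    | Sum.inl _, Sum.inr _ => True
    | Sum.inr _, Sum.inl _ => True
  symm := by
    constructor
    rintro (a | a) (b | b) h
    exacts [G.symm.symm _ _ h, trivial, trivial, H.symm.symm _ _ h]
  loopless := by
    constructor
    rintro (a | a) h
    exacts [G.loopless.irrefl a h, H.loopless.irrefl a h]

/-- The lexicographic product `G[H]`. -/
def lexProd {α β : Type*} (G : SimpleGraph α) (H : SimpleGraph β) :
    SimpleGraph (α × β) where
  Adj x y := G.Adj x.1 y.1 ∨ (x.1 = y.1 ∧ H.Adj x.2 y.2)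
  symm := by
    constructor
    rintro x y (h | ⟨e, h⟩)
    exacts [Or.inl h.symm, Or.inr ⟨e.symm, h.symm⟩]
  loopless := by
    constructor
    rintro x (h | ⟨e, h⟩)
    exacts [G.loopless.irrefl _ h, H.loopless.irrefl _ h]

/-- The friendship graph `F_n`: `n` triangles sharing the central vertex `none`. -/
def friendship (n : ℕ) : SimpleGraph (Option (Fin n × Fin 2)) where
  Adj x y := x ≠ y ∧ (x = none ∨ y = none ∨ ∃ i a b, x = some (i, a) ∧ y = some (i, b))
  symm := by
    constructor
    rintro x y ⟨hne, h⟩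
    refine ⟨hne.symm, ?_⟩
    rcases h with h | h | ⟨i, a, b, hx, hy⟩
    · exact Or.inr (Or.inl h)
    · exact Or.inl h
    · exact Or.inr (Or.inr ⟨i, b, a, hy, hx⟩)
  loopless := ⟨fun x h => h.1 rfl⟩

/-- The bistar `B_{n,n}`: two adjacent centers, each with `n` leaves. -/
def bistar (n : ℕ) : SimpleGraph (Bool ⊕ Bool × Fin n) where
  Adj x y :=
    match x, y with
    | Sum.inl a, Sum.inl b => a ≠ b
    | Sum.inl a, Sum.inr (c, _) => a = c
    | Sum.inr (c, _), Sum.inl a => a = c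
    | Sum.inr _, Sum.inr _ => False
  symm := by
    constructor
    rintro (a | ⟨c, i⟩) (b | ⟨d, j⟩) h
    exacts [h.symm, h, h, h.elim]
  loopless := by
    constructor
    rintro (a | ⟨c, i⟩) h
    exacts [h rfl, h]

/-! Every vertex of column `u` of `C_m[K̄_n]` is adjacent to exactly the vertices of columns
`u ± 1`, so its weight is `S (u - 1) + S (u + 1)`, where `S` is the column sum of the labelling.
If `S` takes one value on even and another on odd columns, the weights are two values alternating
with the parity of the column, a proper colouring of the even cycle; two is also the minimum, since
the graph has edges.

Such a labelling gives `(u, j)` the label `m j + r_j(u) + 1`, with each row `r_j` a permutation of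
`{0, …, m - 1}`. Past a head of two rows (`n` even) or three rows (`n` odd) the rows alternate
between increasing and decreasing, so each further pair of rows adds `m - 1` to every column; the
head rows are chosen to make the column sums depend on parity. -/

open SimpleGraph

section LowerBound

variable {V : Type*} [Fintype V] {G : SimpleGraph V} {f : V → ℕ}

lemma IsLDAL.two_le_card_image_ldWeight (hf : IsLDAL G f) {u v : V} (huv : G.Adj u v) :
    2 ≤ #(univ.image (ldWeight G f)) :=
  one_lt_card.mpr ⟨_, mem_image_of_mem _ (mem_univ u), _, mem_image_of_mem _ (mem_univ v),
    hf.2 huv⟩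

lemma chiLD_eq_two_of_isLDAL (hf : IsLDAL G f) (hcard : #(univ.image (ldWeight G f)) = 2)
    {u v : V} (huv : G.Adj u v) : chiLD G = 2 := by
  refine le_antisymm (Nat.sInf_le ⟨f, hf, hcard⟩) (le_csInf ⟨2, f, hf, hcard⟩ ?_)
  rintro k ⟨g, hg, rfl⟩
  exact hg.two_le_card_image_ldWeight huv

end LowerBound

lemma ldWeight_eq_sum_neighborFinset {V : Type*} [Fintype V] (G : SimpleGraph V)
    [DecidableRel G.Adj] (f : V → ℕ) (v : V) :
    ldWeight G f v = ∑ w ∈ G.neighborFinset v, f w := by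
  rw [ldWeight, neighborFinset_eq_filter, sum_filter]
  congr!

lemma lexProd_bot_adj {α β : Type*} {G : SimpleGraph α} {x y : α × β} :
    (lexProd G (⊥ : SimpleGraph β)).Adj x y ↔ G.Adj x.1 y.1 := by
  simp [lexProd]

lemma ldWeight_lexProd_bot {α β : Type*} [Fintype α] [Fintype β] (G : SimpleGraph α)
    (f : α × β → ℕ) (x : α × β) :
    ldWeight (lexProd G (⊥ : SimpleGraph β)) f x = ldWeight G (fun a ↦ ∑ b, f (a, b)) x.1 := by
  rw [ldWeight, ldWeight, Fintype.sum_prod_type]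
  refine sum_congr rfl fun a _ ↦ ?_
  split_ifs with h
  · exact sum_congr rfl fun b _ ↦ if_pos (lexProd_bot_adj.mpr h)
  · exact sum_eq_zero fun b _ ↦ if_neg (mt lexProd_bot_adj.mp h)

lemma ldWeight_cycleGraph {m : ℕ} [NeZero m] (hm : 3 ≤ m) (g : Fin m → ℕ) (u : Fin m) :
    ldWeight (cycleGraph m) g u = g (u - 1) + g (u + 1) := by
  classical
  obtain ⟨k, rfl⟩ : ∃ k, m = k + 3 := ⟨m - 3, by omega⟩
  have hne : u - 1 ≠ u + 1 := by
    intro h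
    have h2 : u + (1 + 1) = u + 0 := by rw [← add_assoc, ← h, sub_add_cancel, add_zero]
    have h3 := congrArg Fin.val (add_left_cancel h2)
    simp [Fin.val_add, Nat.mod_eq_of_lt (show 2 < k + 3 by omega)] at h3
  rw [ldWeight_eq_sum_neighborFinset, cycleGraph_neighborFinset, sum_pair hne]

lemma cycleGraph_adj_val_mod_two_ne {m : ℕ} (hme : Even m) {u v : Fin m}
    (h : (cycleGraph m).Adj u v) : u.val % 2 ≠ v.val % 2 := by
  have h2 := hme.two_dvd
  have hu := u.isLt
  have hv := v.isLt
  rw [cycleGraph_adj'] at h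
  rcases h with h | h
  · have := Nat.mod_mod_of_dvd (m - v + u) h2
    rw [← Fin.val_sub, h] at this
    omega
  · have := Nat.mod_mod_of_dvd (m - u + v) h2
    rw [← Fin.val_sub, h] at this
    omega

lemma ldWeight_cycleGraph_of_mod_two {m : ℕ} [NeZero m] (hm : 3 ≤ m) (hme : Even m)
    {g : Fin m → ℕ} {P Q : ℕ} (hg : ∀ v, g v = if v.val % 2 = 0 then P else Q) (u : Fin m) :
    ldWeight (cycleGraph m) g u = if u.val % 2 = 0 then 2 * Q else 2 * P := by
  obtain ⟨k, rfl⟩ : ∃ k, m = k + 2 := ⟨m - 2, by omega⟩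
  have h1 := cycleGraph_adj_val_mod_two_ne hme (cycleGraph_adj.mpr (Or.inl (sub_sub_cancel u 1)))
  have h2 := cycleGraph_adj_val_mod_two_ne hme
    (cycleGraph_adj.mpr (Or.inr (add_sub_cancel_left u 1)))
  rw [ldWeight_cycleGraph hm, hg, hg]
  split_ifs <;> omega

theorem chiLD_lexProd_cycleGraph_bot_eq_two_of_colSum {m n : ℕ} (hm : 3 ≤ m) (hme : Even m)
    (hn : 0 < n) {f : Fin m × Fin n → ℕ} (hf : Set.BijOn f Set.univ (Set.Icc 1 (m * n)))
    {P Q : ℕ} (hPQ : P ≠ Q) (hcol : ∀ u, ∑ j, f (u, j) = if u.val % 2 = 0 then P else Q) :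
    chiLD (lexProd (cycleGraph m) (⊥ : SimpleGraph (Fin n))) = 2 := by
  have : NeZero m := ⟨by omega⟩
  have hW (x : Fin m × Fin n) : ldWeight (lexProd (cycleGraph m) ⊥) f x =
      if x.1.val % 2 = 0 then 2 * Q else 2 * P := by
    rw [ldWeight_lexProd_bot, ldWeight_cycleGraph_of_mod_two hm hme hcol]
  have hLD : IsLDAL (lexProd (cycleGraph m) ⊥) f := by
    refine ⟨by simpa using hf, fun x y hxy ↦ ?_⟩
    have := cycleGraph_adj_val_mod_two_ne hme (lexProd_bot_adj.mp hxy)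
    rw [hW, hW]
    split_ifs <;> omega
  have h01 : (lexProd (cycleGraph m) ⊥).Adj ((0 : Fin m), (⟨0, hn⟩ : Fin n)) (1, ⟨0, hn⟩) :=
    lexProd_bot_adj.mpr <| cycleGraph_adj'.mpr <| Or.inr <| by
      simp [Nat.mod_eq_of_lt (show 1 < m by omega)]
  refine chiLD_eq_two_of_isLDAL hLD (le_antisymm ?_ (hLD.two_le_card_image_ldWeight h01)) h01
  have hsub : univ.image (ldWeight (lexProd (cycleGraph m) ⊥) f) ⊆ {2 * Q, 2 * P} :=
    image_subset_iff.mpr fun x _ ↦ by rw [hW]; split_ifs <;> simp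
  exact (card_le_card hsub).trans card_le_two

lemma bijOn_mul_add_succ {m n : ℕ} {r : ℕ → ℕ → ℕ} (hr_lt : ∀ j < n, ∀ u < m, r j u < m)
    (hr_inj : ∀ j < n, ∀ u < m, ∀ v < m, r j u = r j v → u = v) :
    Set.BijOn (fun x : Fin m × Fin n ↦ m * x.2 + r x.2 x.1 + 1) Set.univ (Set.Icc 1 (m * n)) := by
  have hmaps (x : Fin m × Fin n) : m * x.2 + r x.2 x.1 + 1 ∈ Finset.Icc 1 (m * n) := by
    have := hr_lt x.2 x.2.2 x.1 x.1.2
    have := Nat.mul_le_mul_left m (Nat.succ_le_of_lt x.2.2)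
    rw [Nat.mul_succ] at this
    simp only [mem_Icc]
    omega
  have hinj : Function.Injective (fun x : Fin m × Fin n ↦ m * x.2 + r x.2 x.1 + 1) := by
    rintro ⟨u, j⟩ ⟨v, i⟩ h
    have hu := hr_lt j j.2 u u.2
    have hv := hr_lt i i.2 v v.2
    have hm : 0 < m := by omega
    simp only [add_left_inj] at h
    have hji : j = i := Fin.ext <| by
      simpa [Nat.mul_add_div hm, Nat.div_eq_of_lt hu, Nat.div_eq_of_lt hv] using
        congrArg (· / m) h
    subst hji
    have huv := hr_inj j j.2 u u.2 v v.2 <| by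
      simpa [Nat.mul_add_mod, Nat.mod_eq_of_lt hu, Nat.mod_eq_of_lt hv] using congrArg (· % m) h
    rw [Fin.ext huv]
  refine ⟨fun x _ ↦ by simpa using hmaps x, hinj.injOn, ?_⟩
  simpa using surjOn_of_injOn_of_card_le (s := univ) _ (fun x _ ↦ hmaps x) hinj.injOn (by simp)

theorem chiLD_lexProd_cycleGraph_bot_eq_two_of_rows {m n : ℕ} (hm : 3 ≤ m) (hme : Even m)
    (hn : 0 < n) {r : ℕ → ℕ → ℕ} (hr_lt : ∀ j < n, ∀ u < m, r j u < m)
    (hr_inj : ∀ j < n, ∀ u < m, ∀ v < m, r j u = r j v → u = v) {A B : ℕ} (hAB : A ≠ B)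
    (hsum : ∀ u < m, ∑ j ∈ range n, r j u = if u % 2 = 0 then A else B) :
    chiLD (lexProd (cycleGraph m) (⊥ : SimpleGraph (Fin n))) = 2 := by
  refine chiLD_lexProd_cycleGraph_bot_eq_two_of_colSum hm hme hn (bijOn_mul_add_succ hr_lt hr_inj)
    (P := m * ∑ j ∈ range n, j + A + n) (Q := m * ∑ j ∈ range n, j + B + n) (by omega)
    fun u ↦ ?_
  rw [Fin.sum_univ_eq_sum_range (fun j ↦ m * j + r j u + 1), sum_add_distrib, sum_add_distrib,
    ← mul_sum, hsum u u.2]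
  simp only [sum_const, card_range, smul_eq_mul, mul_one]
  split_ifs <;> rfl

def snake (m j u : ℕ) : ℕ := if j % 2 = 0 then u else m - 1 - u

lemma sum_range_snake {m u : ℕ} (hu : u < m) (k : ℕ) :
    ∑ j ∈ range (2 * k), snake m j u = k * (m - 1) := by
  induction k with
  | zero => simp
  | succ k ih =>
    rw [show 2 * (k + 1) = 2 * k + 1 + 1 by ring, sum_range_succ, sum_range_succ, ih, snake,
      snake, if_pos (by omega), if_neg (by omega), add_one_mul]
    omega

theorem chiLD_lexProd_cycleGraph_bot_eq_two_of_head {m h k : ℕ} (hm : 3 ≤ m) (hme : Even m)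
    (hn : 0 < h + 2 * k) {H : ℕ → ℕ → ℕ} (hH_lt : ∀ j < h, ∀ u < m, H j u < m)
    (hH_inj : ∀ j < h, ∀ u < m, ∀ v < m, H j u = H j v → u = v) {A B : ℕ} (hAB : A ≠ B)
    (hH_sum : ∀ u < m, ∑ j ∈ range h, H j u = if u % 2 = 0 then A else B) :
    chiLD (lexProd (cycleGraph m) (⊥ : SimpleGraph (Fin (h + 2 * k)))) = 2 := by
  refine chiLD_lexProd_cycleGraph_bot_eq_two_of_rows hm hme hn
    (r := fun j u ↦ if j < h then H j u else snake m (j - h) u)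
    (A := A + k * (m - 1)) (B := B + k * (m - 1)) ?_ ?_ (by omega) ?_
  · intro j _ u hu
    split_ifs with hj
    · exact hH_lt j hj u hu
    · unfold snake; split_ifs <;> omega
  · intro j _ u hu v hv
    split_ifs with hj
    · exact hH_inj j hj u hu v hv
    · unfold snake; split_ifs <;> omega
  · intro u hu
    rw [sum_range_add, sum_congr rfl fun j hj ↦ if_pos (mem_range.mp hj),
      sum_congr rfl fun j _ ↦ if_neg (by omega), hH_sum u hu]
    simp only [Nat.add_sub_cancel_left, sum_range_snake hu]
    split_ifs <;> rfl

theorem chiLD_lexProd_cycleGraph_bot_two_add_two_mul {m : ℕ} (hm : 3 ≤ m) (hme : Even m)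
    (k : ℕ) : chiLD (lexProd (cycleGraph m) (⊥ : SimpleGraph (Fin (2 + 2 * k)))) = 2 := by
  have := Nat.even_iff.mp hme
  refine chiLD_lexProd_cycleGraph_bot_eq_two_of_head hm hme (by omega)
    (H := fun j u ↦ if j = 0 then (if u % 2 = 0 then u + 1 else u - 1) else m - 1 - u)
    (A := m) (B := m - 2) ?_ ?_ (by omega) ?_
  · intro j _ u hu
    split_ifs <;> omega
  · intro j _ u hu v hv
    split_ifs <;> omega
  · intro u hu
    simp only [sum_range_succ, range_one, sum_singleton, ↓reduceIte, one_ne_zero]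
    split_ifs <;> omega

theorem chiLD_lexProd_cycleGraph_bot_three_add_two_mul {m : ℕ} (hm : 3 ≤ m) (hme : Even m)
    (k : ℕ) : chiLD (lexProd (cycleGraph m) (⊥ : SimpleGraph (Fin (3 + 2 * k)))) = 2 := by
  have := Nat.even_iff.mp hme
  -- Rows 1 and 2 map the even columns onto `[0, m/2)` and the odd ones onto `[m/2, m)`.
  refine chiLD_lexProd_cycleGraph_bot_eq_two_of_head hm hme (by omega)
    (H := fun j u ↦ if j = 0 then u else if u % 2 = 0 then m / 2 - 1 - u / 2 else m - 1 - u / 2)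
    (A := m - 2) (B := 2 * m - 1) ?_ ?_ (by omega) ?_
  · intro j _ u hu
    split_ifs <;> omega
  · intro j _ u hu v hv
    split_ifs <;> omega
  · intro u hu
    simp only [sum_range_succ, range_one, sum_singleton, ↓reduceIte, one_ne_zero,
      OfNat.ofNat_ne_zero]
    split_ifs <;> omega

theorem stmt_13 (n m : ℕ) (hn : 1 < n) (hm : 4 ≤ m) (hme : Even m) :
    chiLD (lexProd (SimpleGraph.cycleGraph m) (⊥ : SimpleGraph (Fin n))) = 2 := by
  obtain ⟨k, rfl | rfl⟩ : ∃ k, n = 2 + 2 * k ∨ n = 3 + 2 * k := ⟨(n - 2) / 2, by omega⟩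
  · exact chiLD_lexProd_cycleGraph_bot_two_add_two_mul (by omega) hme k
  · exact chiLD_lexProd_cycleGraph_bot_three_add_two_mul (by omega) hme k
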